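/- For every p ∈ (1/2, 1] there exists a constant c_p such that for all N ∈ ℕ: ∫₀¹ sup_{1≤n≤2^N} ( n |K_n(x)| )^p dx ≤ c_p 2^{N(2p−1)}. -/

import Mathlib

open MeasureTheory Filter
open scoped ENNReal NNReal

noncomputable section

namespace Walsh

/-- Lebesgue measure restricted to `[0,1)`. -/
def μI : Measure ℝ := volume.restrict (Set.Ico (0:ℝ) 1)

/-- The `k`-th binary digit `x_k` of `x ∈ [0,1)`, using the expansion terminating
in `0`'s for dyadic rationals. -/
def digit (k : ℕ) (x : ℝ) : ℕ := (⌊x * 2 ^ (k + 1)⌋).toNat % 2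

/-- `ε_k(n)`, the `k`-th binary coefficient of `n`. -/
def eps (k n : ℕ) : ℕ := if n.testBit k then 1 else 0

/-- Walsh–Paley function `w_n(x) = (-1)^{Σ_k ε_k(n) x_k}`. -/
def walsh (n : ℕ) (x : ℝ) : ℝ :=
  (-1 : ℝ) ^ (∑ k ∈ Finset.range (n + 1), eps k n * digit k x)

/-- Walsh–Dirichlet kernel `D_n = Σ_{k=0}^{n-1} w_k`. -/
def D (n : ℕ) (x : ℝ) : ℝ := ∑ k ∈ Finset.range n, walsh k x

/-- Walsh–Fejér kernel `K_n = (1/n) Σ_{k=1}^{n} D_k`. -/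
def K (n : ℕ) (x : ℝ) : ℝ := (1 / (n : ℝ)) * ∑ k ∈ Finset.Icc 1 n, D k x

/-- Partial sums `S_M(f) = Σ_{i=0}^{M-1} f̂(i) w_i` of the Walsh–Fourier series. -/
def S (f : ℝ → ℝ) (M : ℕ) (x : ℝ) : ℝ :=
  ∑ i ∈ Finset.range M, (∫ t in Set.Ico (0:ℝ) 1, f t * walsh i t) * walsh i x

/-- `Q_n = q_0 + ⋯ + q_{n-1}`. -/
def Q (q : ℕ → ℝ) (n : ℕ) : ℝ := ∑ k ∈ Finset.range n, q k

/-- Walsh–Nörlund mean `t_n(f) = (1/Q_n) Σ_{k=1}^n q_{n-k} S_k(f)`. -/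
def t (q : ℕ → ℝ) (n : ℕ) (f : ℝ → ℝ) (x : ℝ) : ℝ :=
  (1 / Q q n) * ∑ k ∈ Finset.Icc 1 n, q (n - k) * S f k x

/-- Walsh–Nörlund kernel `F_n = (1/Q_n) Σ_{k=1}^n q_{n-k} D_k`. -/
def F (q : ℕ → ℝ) (n : ℕ) (x : ℝ) : ℝ :=
  (1 / Q q n) * ∑ k ∈ Finset.Icc 1 n, q (n - k) * D k x

/-- Maximal Nörlund operator `t^*(f) = sup_{n ≥ 1} |t_n(f)|`, valued in `ℝ≥0∞`. -/
def tstar (q : ℕ → ℝ) (f : ℝ → ℝ) (x : ℝ) : ℝ≥0∞ :=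
  ⨆ n ∈ Set.Ici 1, ENNReal.ofReal |t q n f x|

/-- `L^p[0,1)` quasinorm (`0 < p ≤ 1`) of a real function, valued in `ℝ≥0∞`. -/
def LpNorm (p : ℝ) (g : ℝ → ℝ) : ℝ≥0∞ :=
  (∫⁻ x in Set.Ico (0:ℝ) 1, ENNReal.ofReal |g x| ^ p) ^ (1 / p)

/-- `L^p[0,1)` quasinorm of an `ℝ≥0∞`-valued function. -/
def LpNormE (p : ℝ) (g : ℝ → ℝ≥0∞) : ℝ≥0∞ :=
  (∫⁻ x in Set.Ico (0:ℝ) 1, g x ^ p) ^ (1 / p)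

/-- `L^∞[0,1)` norm. -/
def LinfNorm (g : ℝ → ℝ) : ℝ≥0∞ := essSup (fun x => ENNReal.ofReal |g x|) μI

/-- Dyadic maximal function `E^*(f) = sup_m |S_{2^m}(f)|`, valued in `ℝ≥0∞`. -/
def maxS (f : ℝ → ℝ) (x : ℝ) : ℝ≥0∞ := ⨆ m : ℕ, ENNReal.ofReal |S f (2 ^ m) x|

/-- Dyadic Hardy space quasinorm `‖f‖_{H_p} = ‖sup_m |S_{2^m} f|‖_{L^p}`. -/
def HpNorm (p : ℝ) (f : ℝ → ℝ) : ℝ≥0∞ :=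
  (∫⁻ x in Set.Ico (0:ℝ) 1, maxS f x ^ p) ^ (1 / p)

/-- Dyadic (logical) addition `x ∔ y = Σ_k |x_k - y_k| 2^{-(k+1)}`. -/
def dadd (x y : ℝ) : ℝ :=
  ∑' k : ℕ, |(digit k x : ℝ) - (digit k y : ℝ)| * (2 : ℝ)⁻¹ ^ (k + 1)

/-- The dyadic interval `I_N = [0, 2^{-N})`. -/
def IN (N : ℕ) : Set ℝ := Set.Ico (0:ℝ) (1 / 2 ^ N)

/-- `F_{n,1} = (w_n/Q_n) Σ_{j=1}^r Q_{n^{(j-1)}} w_{2^{n_j}} D_{2^{n_j}}`,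
the first part of the Nörlund kernel decomposition. The sum over the binary
decomposition `n = 2^{n_1} + ⋯ + 2^{n_r}` is re-indexed over the set bit
positions `i` of `n`; if `i = n_j` then `n^{(j-1)} = n mod 2^{i+1}`. -/
def F1 (q : ℕ → ℝ) (n : ℕ) (x : ℝ) : ℝ :=
  (walsh n x / Q q n) *
    ∑ i ∈ Finset.range (n + 1),
      if n.testBit i then Q q (n % 2 ^ (i + 1)) * walsh (2 ^ i) x * D (2 ^ i) x else 0

end Walsh

/-!
Write `n K_n = D_1 + ⋯ + D_n`. Splitting `n = 2^N + i` with `i < 2^N` and using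
`w_{2^N + i} = w_{2^N} w_i` gives `|n K_n| ≤ |2^N K_{2^N}| + 2^N |D_{2^N}| + |i K_i|`, so for
`n < 2^{N+1}` the quantity `n |K_n|` is dominated by the dyadic terms of levels `m ≤ N`. These live
on the sets where the binary digits `x_0, …, x_{m-1}` all vanish except possibly `x_j`:
`D_{2^m}` is `2^m` times the indicator of the set with no exception, and `2^m K_{2^m}` is at most
`Σ_{j ≤ m} 2^{m+j}` times their indicators. Each such set has measure at most `2^{1-m}`, and
`t ↦ t^p` is subadditive for `p ≤ 1`, so the integral is at most
`Σ_{j ≤ m ≤ N} 2^{(m+j+1)p} 2^{1-m}`, a geometric sum with ratio `2^{2p-1}`, which exceeds `1`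
exactly because `p > 1/2`.
-/

theorem integral_rpow_le_of_le_sum_indicator {α ι : Type*} [MeasurableSpace α] {μ : Measure α}
    [IsFiniteMeasure μ] {p : ℝ} (hp0 : 0 < p) (hp1 : p ≤ 1) {s : Finset ι} {c : ι → ℝ}
    {E : ι → Set α} (hc : ∀ i ∈ s, 0 ≤ c i) (hE : ∀ i ∈ s, MeasurableSet (E i)) {f : α → ℝ}
    (hf0 : ∀ᵐ x ∂μ, 0 ≤ f x) (hf : ∀ᵐ x ∂μ, f x ≤ ∑ i ∈ s, (E i).indicator (fun _ => c i) x) :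
    ∫ x, f x ^ p ∂μ ≤ ∑ i ∈ s, μ.real (E i) * c i ^ p := by
  have hint : Integrable (fun x => ∑ i ∈ s, (E i).indicator (fun _ => c i ^ p) x) μ :=
    integrable_finsetSum _ fun i hi => (integrable_const _).indicator (hE i hi)
  have hpow : ∀ x, (∑ i ∈ s, (E i).indicator (fun _ => c i) x) ^ p
      ≤ ∑ i ∈ s, (E i).indicator (fun _ => c i ^ p) x := by
    intro x
    refine (Finset.le_sum_of_subadditive_on_pred (· ^ p) (0 ≤ ·) (by simp [hp0.ne'])
      (fun a b ha hb => Real.rpow_add_le_add_rpow ha hb hp0.le hp1) (fun _ _ => add_nonneg) _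
      fun i hi => Set.indicator_nonneg (fun _ _ => hc i hi) x).trans_eq ?_
    refine Finset.sum_congr rfl fun i _ => ?_
    by_cases hx : x ∈ E i <;> simp [hx, Real.zero_rpow hp0.ne']
  calc ∫ x, f x ^ p ∂μ ≤ ∫ x, ∑ i ∈ s, (E i).indicator (fun _ => c i ^ p) x ∂μ := by
        refine integral_mono_of_nonneg (hf0.mono fun x hx => Real.rpow_nonneg hx p) hint ?_
        filter_upwards [hf0, hf] with x hx0 hx
        exact (Real.rpow_le_rpow hx0 hx hp0.le).trans (hpow x)
    _ = ∑ i ∈ s, μ.real (E i) * c i ^ p := by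
        rw [integral_finsetSum _ fun i hi => (integrable_const _).indicator (hE i hi)]
        exact Finset.sum_congr rfl fun i hi => integral_indicator_const _ (hE i hi)

lemma geom_sum_le_pow_div {r : ℝ} (hr : 1 < r) (n : ℕ) :
    ∑ k ∈ Finset.range n, r ^ k ≤ r ^ n / (r - 1) := by
  rw [geom_sum_eq hr.ne']
  exact div_le_div_of_nonneg_right (by linarith) (by linarith)

def indexTriangle (N : ℕ) : Finset (Σ _ : ℕ, ℕ) :=
  (Finset.range (N + 1)).sigma fun m => Finset.range (m + 1)

lemma exists_sum_indexTriangle_le_mul_pow {a : ℝ} (ha : 1 < a) (ha2 : 2 < a ^ 2) : ∃ C, ∀ N : ℕ,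
    ∑ i ∈ indexTriangle N, 2 / 2 ^ i.1 * a ^ (i.1 + i.2 + 1) ≤ C * (a ^ 2 / 2) ^ N := by
  set r := a ^ 2 / 2
  have hr : 1 < r := by rw [lt_div_iff₀ two_pos]; linarith
  have hinner : ∀ m : ℕ, ∑ j ∈ Finset.range (m + 1), 2 / 2 ^ m * a ^ (m + j + 1)
      ≤ 2 * a ^ 2 / (a - 1) * r ^ m := fun m => calc
    ∑ j ∈ Finset.range (m + 1), 2 / 2 ^ m * a ^ (m + j + 1)
        = 2 * a ^ (m + 1) / 2 ^ m * ∑ j ∈ Finset.range (m + 1), a ^ j := by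
          rw [Finset.mul_sum]
          refine Finset.sum_congr rfl fun j _ => ?_
          ring
      _ ≤ 2 * a ^ (m + 1) / 2 ^ m * (a ^ (m + 1) / (a - 1)) := by
          gcongr
          exact geom_sum_le_pow_div ha _
      _ = 2 * a ^ 2 / (a - 1) * r ^ m := by
          rw [div_pow, ← pow_mul]
          field_simp
          ring
  refine ⟨2 * a ^ 2 / (a - 1) * (r / (r - 1)), fun N => ?_⟩
  rw [indexTriangle, Finset.sum_sigma]
  calc ∑ m ∈ Finset.range (N + 1), ∑ j ∈ Finset.range (m + 1), 2 / 2 ^ m * a ^ (m + j + 1)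
      ≤ ∑ m ∈ Finset.range (N + 1), 2 * a ^ 2 / (a - 1) * r ^ m :=
        Finset.sum_le_sum fun m _ => hinner m
    _ ≤ 2 * a ^ 2 / (a - 1) * (r ^ (N + 1) / (r - 1)) := by
        rw [← Finset.mul_sum]
        have : 0 < a - 1 := by linarith
        gcongr
        exact geom_sum_le_pow_div hr _
    _ = 2 * a ^ 2 / (a - 1) * (r / (r - 1)) * r ^ N := by ring

lemma exists_sum_indexTriangle_rpow_le {p : ℝ} (hp : 1 / 2 < p) : ∃ C, ∀ N : ℕ,
    ∑ i ∈ indexTriangle N, 2 / 2 ^ i.1 * ((2:ℝ) ^ (i.1 + i.2 + 1)) ^ p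
      ≤ C * (2:ℝ) ^ ((N:ℝ) * (2 * p - 1)) := by
  have hsq : ((2:ℝ) ^ p) ^ 2 / 2 = 2 ^ (2 * p - 1) := by
    rw [← Real.rpow_mul_natCast zero_le_two, Real.rpow_sub two_pos, Real.rpow_one, mul_comm]
    norm_num
  have ha2 : 2 < ((2:ℝ) ^ p) ^ 2 := by
    have : 1 < (2:ℝ) ^ (2 * p - 1) := Real.one_lt_rpow one_lt_two (by linarith)
    rw [← hsq, lt_div_iff₀ two_pos] at this
    linarith
  obtain ⟨C, hC⟩ :=
    exists_sum_indexTriangle_le_mul_pow (Real.one_lt_rpow one_lt_two (by linarith)) ha2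
  refine ⟨C, fun N => ?_⟩
  simp_rw [← Real.rpow_pow_comm zero_le_two]
  rw [mul_comm (N:ℝ), Real.rpow_mul_natCast zero_le_two, ← hsq]
  exact hC N

lemma mem_Ico_of_floor_mul_eq {x c : ℝ} (hx : 0 ≤ x) (hc : 0 < c) {k : ℕ}
    (h : ⌊x * c⌋₊ = k) : x ∈ Set.Ico (k / c) ((k + 1) / c) := by
  rw [Nat.floor_eq_iff (by positivity)] at h
  exact ⟨(div_le_iff₀ hc).mpr h.1, (lt_div_iff₀ hc).mpr h.2⟩

namespace Walsh

lemma eps_eq_zero_of_lt_two_pow {k n : ℕ} (h : n < 2 ^ k) : eps k n = 0 := by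
  simp [eps, Nat.testBit_lt_two_pow h]

lemma walsh_eq_of_lt_two_pow {n M : ℕ} (hn : n < 2 ^ M) (x : ℝ) :
    walsh n x = (-1) ^ ∑ k ∈ Finset.range M, eps k n * digit k x := by
  have vanish : ∀ K, n < 2 ^ K → ∀ k ∈ Finset.range (n + 1 + M),
      k ∉ Finset.range K → eps k n * digit k x = 0 := fun K hK k _ hk => by
    rw [eps_eq_zero_of_lt_two_pow (hK.trans_le (Nat.pow_le_pow_right two_pos
      (by simpa using hk))), zero_mul]
  rw [walsh, Finset.sum_subset (by simp)
    (vanish _ (n.lt_two_pow_self.trans_le (Nat.pow_le_pow_right two_pos n.le_succ))),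
    Finset.sum_subset (by simp) (vanish _ hn)]

lemma abs_walsh (n : ℕ) (x : ℝ) : |walsh n x| = 1 := by
  simp [walsh]

lemma walsh_two_pow (m : ℕ) (x : ℝ) : walsh (2 ^ m) x = (-1) ^ digit m x := by
  rw [walsh_eq_of_lt_two_pow (Nat.pow_lt_pow_right one_lt_two m.lt_succ_self),
    Finset.sum_eq_single m (fun k _ hk => by simp [eps, Ne.symm hk]) (by simp)]
  simp [eps]

lemma eps_two_pow_add {m i k : ℕ} (hi : i < 2 ^ m) (hk : k ≤ m) :
    eps k (2 ^ m + i) = eps k (2 ^ m) + eps k i := by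
  rcases hk.lt_or_eq with hk | rfl
  · simp [eps, Nat.testBit_two_pow_add_gt hk, Nat.testBit_two_pow_of_ne hk.ne']
  · simp [eps, Nat.testBit_two_pow_add_eq, Nat.testBit_lt_two_pow hi]

lemma walsh_two_pow_add {m i : ℕ} (hi : i < 2 ^ m) (x : ℝ) :
    walsh (2 ^ m + i) x = walsh (2 ^ m) x * walsh i x := by
  have hlt : ∀ n ≤ 2 ^ m + i, n < 2 ^ (m + 1) := fun n hn => by omega
  rw [walsh_eq_of_lt_two_pow (hlt _ le_rfl), walsh_eq_of_lt_two_pow (hlt _ (by omega)),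
    walsh_eq_of_lt_two_pow (hlt _ (by omega)), ← pow_add, ← Finset.sum_add_distrib]
  refine congrArg _ (Finset.sum_congr rfl fun k hk => ?_)
  rw [eps_two_pow_add hi (Nat.lt_succ_iff.mp (Finset.mem_range.mp hk)), add_mul]

lemma D_two_pow_add {m i : ℕ} (hi : i ≤ 2 ^ m) (x : ℝ) :
    D (2 ^ m + i) x = D (2 ^ m) x + walsh (2 ^ m) x * D i x := by
  rw [D, Finset.sum_range_add, D, D, Finset.mul_sum]
  exact congrArg _ (Finset.sum_congr rfl fun k hk =>
    walsh_two_pow_add ((Finset.mem_range.mp hk).trans_le hi) x)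

/-- Within `[0,1)` and for `j < m` this is `I_m ∪ (I_m ∔ 2^{-j-1})` with `I_m = IN m`, two dyadic
intervals of length `2^{-m}`; for `j ≥ m` it is `I_m`. -/
def digitsZeroExcept (m j : ℕ) : Set ℝ := {x | ∀ i < m, i ≠ j → digit i x = 0}

lemma digitsZeroExcept_zero (j : ℕ) : digitsZeroExcept 0 j = Set.univ := by
  simp [digitsZeroExcept]

lemma digitsZeroExcept_of_le {m j : ℕ} (h : m ≤ j) :
    digitsZeroExcept m j = digitsZeroExcept m m := by
  ext x
  exact forall₂_congr fun i hi => by simp [hi.ne, (hi.trans_le h).ne]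

lemma mem_digitsZeroExcept_succ {m j : ℕ} {x : ℝ} :
    x ∈ digitsZeroExcept (m + 1) j ↔
      x ∈ digitsZeroExcept m j ∧ (m = j ∨ digit m x = 0) := by
  simp only [digitsZeroExcept, Set.mem_ofPred_eq, Nat.lt_succ_iff_lt_or_eq, or_imp, forall_and,
    forall_eq, ← or_iff_not_imp_left]

lemma digit_eq_zero_or_one (k : ℕ) (x : ℝ) : digit k x = 0 ∨ digit k x = 1 :=
  Nat.mod_two_eq_zero_or_one _

lemma D_two_pow (m : ℕ) (x : ℝ) :
    D (2 ^ m) x = (digitsZeroExcept m m).indicator (fun _ => 2 ^ m) x := by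
  induction m with
  | zero => simp [D, walsh, eps, digitsZeroExcept_zero]
  | succ m ih =>
    classical
    rw [pow_succ, mul_two, D_two_pow_add le_rfl, ih, walsh_two_pow]
    simp only [Set.indicator_apply, mem_digitsZeroExcept_succ,
      digitsZeroExcept_of_le (Nat.le_succ m)]
    rcases digit_eq_zero_or_one m x with h | h <;> simp [h] <;> split_ifs <;> ring

def dirichletSum (n : ℕ) (x : ℝ) : ℝ := ∑ k ∈ Finset.range n, D (k + 1) x

lemma natCast_mul_K (n : ℕ) (x : ℝ) : n * K n x = dirichletSum n x := by
  rcases Nat.eq_zero_or_pos n with rfl | hn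
  · simp [dirichletSum]
  rw [K, ← mul_assoc, mul_one_div_cancel (by positivity), one_mul, dirichletSum,
    Finset.range_eq_Ico, Finset.sum_Ico_add' (f := fun k => D k x)]
  rfl

lemma dirichletSum_two_pow_add {m i : ℕ} (hi : i ≤ 2 ^ m) (x : ℝ) :
    dirichletSum (2 ^ m + i) x
      = dirichletSum (2 ^ m) x + i * D (2 ^ m) x + walsh (2 ^ m) x * dirichletSum i x := by
  simp only [dirichletSum, Finset.sum_range_add, add_assoc]
  rw [Finset.sum_congr rfl fun k hk =>
      D_two_pow_add (Nat.succ_le_of_lt ((Finset.mem_range.mp hk).trans_le hi)) x,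
    Finset.sum_add_distrib, Finset.sum_const, Finset.card_range, nsmul_eq_mul, Finset.mul_sum]

lemma dirichletSum_two_pow_succ (m : ℕ) (x : ℝ) : dirichletSum (2 ^ (m + 1)) x
    = (1 + walsh (2 ^ m) x) * dirichletSum (2 ^ m) x + 2 ^ m * D (2 ^ m) x := by
  rw [pow_succ, mul_two, dirichletSum_two_pow_add le_rfl]
  push_cast
  ring

def dyadicMajorant (m : ℕ) (x : ℝ) : ℝ :=
  ∑ j ∈ Finset.range (m + 1), (digitsZeroExcept m j).indicator (fun _ => 2 ^ (m + j)) x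

lemma dyadicMajorant_nonneg (m : ℕ) (x : ℝ) : 0 ≤ dyadicMajorant m x :=
  Finset.sum_nonneg fun _ _ => Set.indicator_nonneg (fun _ _ => by positivity) _

lemma two_pow_mul_D_two_pow (m : ℕ) (x : ℝ) :
    2 ^ m * D (2 ^ m) x = (digitsZeroExcept m m).indicator (fun _ => 2 ^ (m + m)) x := by
  rw [D_two_pow, pow_add]
  by_cases hx : x ∈ digitsZeroExcept m m <;> simp [hx]

lemma indicator_le_dyadicMajorant {m j : ℕ} (hj : j ≤ m) (x : ℝ) :
    (digitsZeroExcept m j).indicator (fun _ => 2 ^ (m + j)) x ≤ dyadicMajorant m x :=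
  Finset.single_le_sum
    (f := fun j => (digitsZeroExcept m j).indicator (fun _ => (2:ℝ) ^ (m + j)) x)
    (fun _ _ => Set.indicator_nonneg (fun _ _ => by positivity) _)
    (Finset.mem_range.mpr (Nat.lt_succ_of_le hj))

lemma two_pow_mul_abs_D_two_pow_le (m : ℕ) (x : ℝ) :
    2 ^ m * |D (2 ^ m) x| ≤ dyadicMajorant m x := by
  rw [← abs_of_nonneg (pow_nonneg zero_le_two m : (0:ℝ) ≤ 2 ^ m), ← abs_mul,
    two_pow_mul_D_two_pow, abs_of_nonneg (Set.indicator_nonneg (fun _ _ => by positivity) _)]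
  exact indicator_le_dyadicMajorant le_rfl x

lemma dyadicMajorant_succ_of_digit_eq_zero {m : ℕ} {x : ℝ} (h : digit m x = 0) :
    dyadicMajorant (m + 1) x = 2 * dyadicMajorant m x
      + (digitsZeroExcept m m).indicator (fun _ => 2 ^ (m + 1 + (m + 1))) x := by
  classical
  have hind : ∀ j (c : ℝ), (digitsZeroExcept (m + 1) j).indicator (fun _ => c) x
      = (digitsZeroExcept m j).indicator (fun _ => c) x := fun j c => by
    simp only [Set.indicator_apply, mem_digitsZeroExcept_succ, h, or_true, and_true]
  rw [dyadicMajorant, Finset.sum_range_succ, hind, digitsZeroExcept_of_le (Nat.le_succ m),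
    dyadicMajorant, Finset.mul_sum]
  congr 1
  refine Finset.sum_congr rfl fun j _ => ?_
  rw [hind]
  by_cases hx : x ∈ digitsZeroExcept m j <;> simp [hx, pow_succ, add_right_comm]; ring

lemma abs_dirichletSum_two_pow_le (m : ℕ) (x : ℝ) :
    |dirichletSum (2 ^ m) x| ≤ dyadicMajorant m x := by
  classical
  induction m with
  | zero => simp [dirichletSum, dyadicMajorant, D, walsh, eps, digitsZeroExcept_zero]
  | succ m ih =>
    rw [dirichletSum_two_pow_succ, walsh_two_pow]
    rcases digit_eq_zero_or_one m x with h | h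
    · rw [dyadicMajorant_succ_of_digit_eq_zero h, h, two_pow_mul_D_two_pow]
      refine (abs_add_le _ _).trans (add_le_add ?_ ?_)
      · norm_num [abs_mul]
        exact ih
      · rw [abs_of_nonneg (Set.indicator_nonneg (fun _ _ => by positivity) _)]
        exact Set.indicator_le_indicator (pow_le_pow_right₀ one_le_two (by omega))
    · have hcell : x ∈ digitsZeroExcept (m + 1) m ↔ x ∈ digitsZeroExcept m m := by
        simp [mem_digitsZeroExcept_succ]
      calc |(1 + (-1) ^ digit m x) * dirichletSum (2 ^ m) x + 2 ^ m * D (2 ^ m) x|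
          = (digitsZeroExcept (m + 1) m).indicator (fun _ => 2 ^ (m + m)) x := by
            rw [h, two_pow_mul_D_two_pow, Set.indicator_apply, Set.indicator_apply, hcell]
            norm_num
            split_ifs <;> simp
        _ ≤ (digitsZeroExcept (m + 1) m).indicator (fun _ => 2 ^ (m + 1 + m)) x :=
            Set.indicator_le_indicator (pow_le_pow_right₀ one_le_two (by omega))
        _ ≤ dyadicMajorant (m + 1) x := indicator_le_dyadicMajorant (Nat.le_succ m) x

lemma abs_dirichletSum_le {N n : ℕ} (hn : n < 2 ^ N) (x : ℝ) :
    |dirichletSum n x| ≤ 2 * ∑ m ∈ Finset.range N, dyadicMajorant m x := by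
  induction N generalizing n with
  | zero => simp [Nat.lt_one_iff.mp hn, dirichletSum]
  | succ N ih =>
    rw [Finset.sum_range_succ, mul_add]
    by_cases hlt : n < 2 ^ N
    · linarith [ih hlt, dyadicMajorant_nonneg N x]
    obtain ⟨i, rfl⟩ := Nat.exists_eq_add_of_le (not_lt.mp hlt)
    have hi : i < 2 ^ N := by rw [pow_succ] at hn; omega
    have hiD : i * |D (2 ^ N) x| ≤ 2 ^ N * |D (2 ^ N) x| :=
      mul_le_mul_of_nonneg_right (by exact_mod_cast hi.le) (abs_nonneg _)
    rw [dirichletSum_two_pow_add hi.le]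
    calc |dirichletSum (2 ^ N) x + i * D (2 ^ N) x + walsh (2 ^ N) x * dirichletSum i x|
        ≤ |dirichletSum (2 ^ N) x| + i * |D (2 ^ N) x| + |dirichletSum i x| := by
          refine (abs_add_le _ _).trans (add_le_add ((abs_add_le _ _).trans_eq ?_) ?_)
          · rw [abs_mul, Nat.abs_cast]
          · rw [abs_mul, abs_walsh, one_mul]
      _ ≤ _ := by
          linarith [abs_dirichletSum_two_pow_le N x, two_pow_mul_abs_D_two_pow_le N x, ih hi]

lemma natCast_mul_abs_K_le {N n : ℕ} (hn : n ≤ 2 ^ N) (x : ℝ) :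
    n * |K n x| ≤ ∑ i ∈ indexTriangle N,
      (digitsZeroExcept i.1 i.2).indicator (fun _ => 2 ^ (i.1 + i.2 + 1)) x := by
  have hn' : n < 2 ^ (N + 1) := by
    have := N.one_le_two_pow
    rw [pow_succ]
    omega
  rw [← Nat.abs_cast n, ← abs_mul, natCast_mul_K, indexTriangle, Finset.sum_sigma]
  refine (abs_dirichletSum_le hn' x).trans_eq ?_
  simp only [dyadicMajorant, Finset.mul_sum, pow_succ]
  refine Finset.sum_congr rfl fun m _ => Finset.sum_congr rfl fun j _ => ?_
  by_cases hx : x ∈ digitsZeroExcept m j <;> simp [hx, mul_comm]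

lemma measurable_digit (k : ℕ) : Measurable (digit k) := by
  unfold digit
  fun_prop

lemma measurableSet_digitsZeroExcept (m j : ℕ) : MeasurableSet (digitsZeroExcept m j) := by
  simp only [digitsZeroExcept, Set.ofPred_forall]
  exact MeasurableSet.iInter fun i => MeasurableSet.iInter fun _ => MeasurableSet.iInter fun _ =>
    measurableSet_eq_fun (measurable_digit i) measurable_const

lemma digit_eq_eps_floor (x : ℝ) {i m : ℕ} (hi : i < m) :
    digit i x = eps (m - 1 - i) ⌊x * 2 ^ m⌋₊ := by
  have hpow : x * 2 ^ (i + 1) = x * 2 ^ m / ((2 ^ (m - 1 - i) : ℕ) : ℝ) := by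
    rw [eq_div_iff (by positivity), mul_assoc, Nat.cast_pow, Nat.cast_ofNat, ← pow_add,
      show i + 1 + (m - 1 - i) = m by omega]
  rw [digit, Int.floor_toNat, hpow, Nat.floor_div_natCast, eps, Nat.testBit_eq_decide_div_mod_eq]
  rcases Nat.mod_two_eq_zero_or_one (⌊x * 2 ^ m⌋₊ / 2 ^ (m - 1 - i)) with h | h <;> simp [h]

lemma floor_mul_two_pow_eq_zero_or {x : ℝ} (hx : x < 1) {m j : ℕ}
    (hcell : x ∈ digitsZeroExcept m j) :
    ⌊x * 2 ^ m⌋₊ = 0 ∨ ⌊x * 2 ^ m⌋₊ = 2 ^ (m - 1 - j) := by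
  set k := ⌊x * 2 ^ m⌋₊
  have hk : k < 2 ^ m := by
    refine (Nat.floor_lt' (by positivity)).mpr ?_
    push_cast
    nlinarith [pow_pos (two_pos (α := ℝ)) m]
  have hbit : ∀ b, b ≠ m - 1 - j → k.testBit b = false := by
    intro b hb
    rcases lt_or_ge b m with hbm | hbm
    · have h := hcell (m - 1 - b) (by omega) (by omega)
      rw [digit_eq_eps_floor x (by omega : m - 1 - b < m), show m - 1 - (m - 1 - b) = b by omega,
        eps] at h
      simpa using h
    · exact Nat.testBit_lt_two_pow (hk.trans_le (Nat.pow_le_pow_right two_pos hbm))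
  cases hkj : k.testBit (m - 1 - j)
  · refine .inl (Nat.eq_of_testBit_eq fun b => ?_)
    by_cases hb : b = m - 1 - j
    · simp [hb, hkj]
    · simp [hbit b hb]
  · refine .inr (Nat.eq_of_testBit_eq fun b => ?_)
    by_cases hb : b = m - 1 - j
    · simp [hb, hkj]
    · simp [hbit b hb, Ne.symm hb]

lemma measureReal_digitsZeroExcept_le (m j : ℕ) :
    (volume.restrict (Set.Ico (0:ℝ) 1)).real (digitsZeroExcept m j) ≤ 2 / 2 ^ m := by
  set a : ℝ := ((2 ^ (m - 1 - j) : ℕ) : ℝ)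
  have hsub : digitsZeroExcept m j ∩ Set.Ico 0 1
      ⊆ Set.Ico 0 (1 / 2 ^ m) ∪ Set.Ico (a / 2 ^ m) ((a + 1) / 2 ^ m) := by
    rintro x ⟨hcell, hx0, hx1⟩
    rcases floor_mul_two_pow_eq_zero_or hx1 hcell with h | h
    · exact .inl (by simpa using mem_Ico_of_floor_mul_eq hx0 (by positivity) h)
    · exact .inr (mem_Ico_of_floor_mul_eq hx0 (by positivity) h)
  rw [measureReal_restrict_apply (measurableSet_digitsZeroExcept m j)]
  calc volume.real (digitsZeroExcept m j ∩ Set.Ico 0 1)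
      ≤ volume.real (Set.Ico 0 (1 / 2 ^ m) ∪ Set.Ico (a / 2 ^ m) ((a + 1) / 2 ^ m)) :=
        measureReal_mono hsub (measure_union_lt_top measure_Ico_lt_top measure_Ico_lt_top).ne
    _ ≤ volume.real (Set.Ico (0:ℝ) (1 / 2 ^ m))
          + volume.real (Set.Ico (a / 2 ^ m) ((a + 1) / 2 ^ m)) := measureReal_union_le _ _
    _ = 2 / 2 ^ m := by
        rw [Real.volume_real_Ico_of_le (by positivity),
          Real.volume_real_Ico_of_le (by gcongr; linarith)]
        ring

lemma iSup_natCast_mul_abs_K_le (N : ℕ) (x : ℝ) :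
    ⨆ n ∈ Set.Icc (1:ℕ) (2 ^ N), (n : ℝ) * |K n x|
      ≤ ∑ i ∈ indexTriangle N,
        (digitsZeroExcept i.1 i.2).indicator (fun _ => 2 ^ (i.1 + i.2 + 1)) x := by
  refine Real.iSup_le (fun n => Real.iSup_le (fun hn => natCast_mul_abs_K_le hn.2 x) ?_) ?_ <;>
    exact Finset.sum_nonneg fun _ _ => Set.indicator_nonneg (fun _ _ => by positivity) x

end Walsh

/-- the maximal Fejér kernel estimate
`∫₀¹ sup_{1 ≤ n ≤ 2^N} (n |K_n|)^p ≤ c_p 2^{N(2p-1)}` for `1/2 < p ≤ 1`. -/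
theorem maximal_fejer_kernel_estimate (p : ℝ) (hp1 : 1/2 < p) (hp2 : p ≤ 1) :
    ∃ c : ℝ, ∀ N : ℕ,
      (∫ x in Set.Ico (0:ℝ) 1,
          (⨆ n ∈ Set.Icc (1:ℕ) (2 ^ N), ((n : ℝ) * |Walsh.K n x|)) ^ p)
        ≤ c * (2:ℝ) ^ ((N:ℝ) * (2 * p - 1)) := by
  have hp0 : 0 < p := by linarith
  obtain ⟨C, hC⟩ := exists_sum_indexTriangle_rpow_le hp1
  refine ⟨C, fun N => le_trans ?_ (hC N)⟩
  calc _ ≤ ∑ i ∈ indexTriangle N,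
          (volume.restrict (Set.Ico (0:ℝ) 1)).real (Walsh.digitsZeroExcept i.1 i.2)
            * ((2:ℝ) ^ (i.1 + i.2 + 1)) ^ p :=
        integral_rpow_le_of_le_sum_indicator hp0 hp2 (fun _ _ => by positivity)
          (fun _ _ => Walsh.measurableSet_digitsZeroExcept _ _)
          (ae_of_all _ fun _ => Real.iSup_nonneg fun _ => Real.iSup_nonneg fun _ => by positivity)
          (ae_of_all _ (Walsh.iSup_natCast_mul_abs_K_le N))
    _ ≤ _ := Finset.sum_le_sum fun i _ => by
        gcongr
        exact Walsh.measureReal_digitsZeroExcept_le _ _
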